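/- arXiv:2404.08847 — 2 statements merged into one kernel-verified Lean document; each statement's English description precedes it below -/
import Mathlib

section
/- Fix m : ℕ, a learning rate η : ℝ, an initial table w₀ : Fin m → ℝ, noise values n : ℕ → Fin m → ℝ, access sets A : ℕ → Finset (Fin m), and gradient maps G : ℕ → (Fin m → ℝ) → (Fin m → ℝ) satisfying sparsity (for every t, every u, and every i ∉ A t, G t u i = 0) and locality (for every t and all u v : Fin m → ℝ, if u i = v i for all i ∈ A t then G t u = G t v). Define the eager noisy update process w : ℕ → Fin m → ℝ by w 0 = w₀ and w (t+1) i = w t i − η · (G t (w t) i + n t i). Define the lazy noise update process, consisting of tables v : ℕ → Fin m → ℝ and a history table h : ℕ → Fin m → ℕ, by v 0 = w₀, h 0 i = 0, and for each t: h (t+1) i = t+1 if i ∈ A (t+1) and h (t+1) i = h t i otherwise; v (t+1) i = v t i − η · G t (v t) i − (if i ∈ A (t+1) then η · ∑_{h t i ≤ s ≤ t} n s i else 0). Then for every t : ℕ and every i : Fin m: (a) v t i = w t i + η · ∑_{h t i ≤ s ≤ t−1} n s i (the lazy value differs from the eager value exactly by the pending, not-yet-applied noise); (b) if i ∈ A t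 then h t i = t and hence v t i = w t i; and (c) G t (v t) = G t (w t), i.e., the lazy process computes exactly the same gradient as the eager process at every iteration. -/
/-- The lazy noise update process (LazyDP) tracks the eager (DP-SGD) process:
(a) the lazy table differs from the eager one exactly by the pending noise,
(b) entries accessed at iteration `t` have fully-flushed noise and agree with the
eager table, and (c) the lazy process computes the same gradients as the eager one. -/
theorem lazy_noise_update_invariant
    (m : ℕ) (η : ℝ) (w₀ : Fin m → ℝ) (n : ℕ → Fin m → ℝ)
    (A : ℕ → Finset (Fin m)) (G : ℕ → (Fin m → ℝ) → (Fin m → ℝ))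
    (hsparse : ∀ t (u : Fin m → ℝ), ∀ i ∉ A t, G t u i = 0)
    (hlocal : ∀ t (u v : Fin m → ℝ), (∀ i ∈ A t, u i = v i) → G t u = G t v)
    (w : ℕ → Fin m → ℝ)
    (hw0 : w 0 = w₀)
    (hw : ∀ t i, w (t + 1) i = w t i - η * (G t (w t) i + n t i))
    (v : ℕ → Fin m → ℝ) (h : ℕ → Fin m → ℕ)
    (hv0 : v 0 = w₀)
    (hh0 : ∀ i, h 0 i = 0)
    (hh : ∀ t i, h (t + 1) i = if i ∈ A (t + 1) then t + 1 else h t i)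
    (hv : ∀ t i, v (t + 1) i = v t i - η * G t (v t) i
        - (if i ∈ A (t + 1) then η * ∑ s ∈ Finset.Ico (h t i) (t + 1), n s i else 0)) :
    (∀ (t : ℕ) (i : Fin m),
        v t i = w t i + η * ∑ s ∈ Finset.Ico (h t i) t, n s i) ∧
    (∀ (t : ℕ) (i : Fin m), i ∈ A t → h t i = t ∧ v t i = w t i) ∧
    (∀ t : ℕ, G t (v t) = G t (w t)) := by
  have hb : ∀ t i, i ∈ A t → h t i = t := by
    intro t i hi
    cases t with
    | zero => exact hh0 i
    | succ t => rw [hh]; simp [hi]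
  have hle : ∀ t i, h t i ≤ t := by
    intro t i; induction t with
    | zero => simp [hh0]
    | succ t ih => rw [hh]; split <;> omega
  have ha : ∀ t i, v t i = w t i + η * ∑ s ∈ Finset.Ico (h t i) t, n s i := by
    intro t
    induction t with
    | zero => intro i; simp [hv0, hw0, hh0]
    | succ t ih =>
      have hG : G t (v t) = G t (w t) := by
        apply hlocal
        intro j hj
        have := ih j
        rw [hb t j hj] at this
        simpa using this
      intro i
      rw [hv, hw, hh, hG, ih i]
      by_cases hi : i ∈ A (t + 1)
      · simp only [hi, if_true]
        rw [Finset.sum_Ico_succ_top (hle t i)]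
        simp [mul_add]; ring
      · simp only [hi, if_false]
        rw [Finset.sum_Ico_succ_top (hle t i)]
        ring
  refine ⟨ha, ?_, ?_⟩
  · intro t i hi
    refine ⟨hb t i hi, ?_⟩
    rw [ha, hb t i hi]; simp
  · intro t
    apply hlocal
    intro j hj
    rw [ha, hb t j hj]; simp
end

section
/- Fix m : ℕ, a learning rate η : ℝ, an initial table w₀ : Fin m → ℝ, noise values n : ℕ → Fin m → ℝ, access sets A : ℕ → Finset (Fin m), and gradient maps G : ℕ → (Fin m → ℝ) → (Fin m → ℝ) satisfying sparsity (for every t, every u, and every i ∉ A t, G t u i = 0) and locality (for every t and all u v : Fin m → ℝ, if u i = v i for all i ∈ A t then G t u = G t v). Define the eager noisy update process w : ℕ → Fin m → ℝ by w 0 = w₀ and w (t+1) i = w t i − η · (G t (w t) i + n t i). Define the lazy noise update process, consisting of tables v : ℕ → Fin m → ℝ and a history table h : ℕ → Fin m → ℕ, by v 0 = w₀, h 0 i = 0, and for each t: h (t+1) i = t+1 if i ∈ A (t+1) and h (t+1) i = h t i otherwise; v (t+1) i = v t i − η · G t (v t) i − (if i ∈ A (t+1) then η · ∑_{h t i ≤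 s ≤ t} n s i else 0). Then for every T : ℕ, the final flushed lazy table equals the final eager table: for every i : Fin m, v T i − η · ∑_{h T i ≤ s ≤ T−1} n s i = w T i. That is, after all remaining delayed noise updates are applied at the end of training, the lazy noise update process produces a model identical to the one produced by eager (baseline DP-SGD) noisy updates. -/
/-- LazyDP correctness: after flushing all remaining delayed noise updates at the end
of training, the lazy noise update process produces exactly the same model as the
eager (baseline DP-SGD) noisy update process. -/
theorem lazy_noise_update_final_equiv
    (m : ℕ) (η : ℝ) (w₀ : Fin m → ℝ) (n : ℕ → Fin m → ℝ)
    (A : ℕ → Finset (Fin m)) (G : ℕ → (Fin m → ℝ) → (Fin m → ℝ))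
    (hsparse : ∀ t (u : Fin m → ℝ), ∀ i ∉ A t, G t u i = 0)
    (hlocal : ∀ t (u v : Fin m → ℝ), (∀ i ∈ A t, u i = v i) → G t u = G t v)
    (w : ℕ → Fin m → ℝ)
    (hw0 : w 0 = w₀)
    (hw : ∀ t i, w (t + 1) i = w t i - η * (G t (w t) i + n t i))
    (v : ℕ → Fin m → ℝ) (h : ℕ → Fin m → ℕ)
    (hv0 : v 0 = w₀)
    (hh0 : ∀ i, h 0 i = 0)
    (hh : ∀ t i, h (t + 1) i = if i ∈ A (t + 1) then t + 1 else h t i)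
    (hv : ∀ t i, v (t + 1) i = v t i - η * G t (v t) i
        - (if i ∈ A (t + 1) then η * ∑ s ∈ Finset.Ico (h t i) (t + 1), n s i else 0)) :
    ∀ (T : ℕ) (i : Fin m),
      v T i - η * ∑ s ∈ Finset.Ico (h T i) T, n s i = w T i := by
  have hle : ∀ T i, h T i ≤ T := by
    intro T
    induction T with
    | zero => intro i; simp [hh0]
    | succ t ih =>
      intro i
      rw [hh]
      split
      · exact le_refl _
      · exact (ih i).trans (Nat.le_succ t)
  intro T
  induction T with
  | zero =>
    intro i
    simp [hh0, hv0, hw0]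
  | succ T ih =>
    -- v and w agree on A T
    have hvw : ∀ i ∈ A T, v T i = w T i := by
      intro i hi
      have := ih i
      cases T with
      | zero => simpa [hh0] using this
      | succ t =>
        rw [hh t i, if_pos hi] at this
        simpa using this
    have hG : G T (v T) = G T (w T) := hlocal T _ _ hvw
    intro i
    have hsplit : ∑ s ∈ Finset.Ico (h T i) (T + 1), n s i
        = (∑ s ∈ Finset.Ico (h T i) T, n s i) + n T i :=
      Finset.sum_Ico_succ_top (hle T i) _
    rw [hv T i, hh T i, hw T i, hG]
    by_cases hi : i ∈ A (T + 1)
    · rw [if_pos hi, if_pos hi, hsplit]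
      have := ih i
      simp [Finset.Ico_self]
      linarith [ih i]
    · rw [if_neg hi, if_neg hi, hsplit]
      linarith [ih i]
end
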